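/- arXiv:1608.03188 — 2 statements merged into one kernel-verified Lean document; each statement's English description precedes it below -/
import Mathlib

section
/- For a permutation σ ∈ S_{2n} and γ₁,γ₂ ∈ S_n[S_2], the number of cycles of Σ₀(γ₁σγ₂)Σ₀(γ₁σγ₂)⁻¹ equals the number of cycles of Σ₀σΣ₀σ⁻¹; i.e., the function z(σ) = (1/2)·C(Σ₀σΣ₀σ⁻¹) is invariant under left and right multiplication by elements of S_n[S_2]. -/
/-- Σ₀ on `Fin n × Bool`, modelling `(1 2)(3 4)⋯(2n−1 2n) ∈ S_{2n}`. -/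
def sigma0 (n : ℕ) : Equiv.Perm (Fin n × Bool) :=
  Equiv.prodCongr (Equiv.refl (Fin n)) (Equiv.swap false true)

/-- The number of cycles of a permutation, counting fixed points. -/
def cycleCount {α : Type*} [Fintype α] [DecidableEq α] (σ : Equiv.Perm α) : ℕ :=
  σ.cycleType.card + (Fintype.card α - σ.cycleType.sum)

lemma conj_aux {G : Type*} [Group G] (s σ γ₁ γ₂ : G) (c1 : γ₁ * s = s * γ₁)
    (c2 : γ₂ * s = s * γ₂) :
    s * (γ₁ * σ * γ₂) * s * (γ₁ * σ * γ₂)⁻¹ = γ₁ * (s * σ * s * σ⁻¹) * γ₁⁻¹ := by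
  simp only [mul_inv_rev, mul_assoc]
  rw [← mul_assoc γ₂ s, c2, mul_assoc, mul_inv_cancel_left]
  rw [← mul_assoc s γ₁, ← c1]
  simp only [mul_assoc]

/-- The cycle count `C(Σ₀σΣ₀σ⁻¹)` (hence `z(σ) = C(Σ₀σΣ₀σ⁻¹)/2`) is invariant under left
and right multiplication of `σ` by elements of `S_n[S_2]`, the centralizer of `Σ₀`. -/
theorem stmt6 (n : ℕ) (σ γ₁ γ₂ : Equiv.Perm (Fin n × Bool))
    (h₁ : γ₁ ∈ Subgroup.centralizer {sigma0 n})
    (h₂ : γ₂ ∈ Subgroup.centralizer {sigma0 n}) :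
    cycleCount (sigma0 n * (γ₁ * σ * γ₂) * sigma0 n * (γ₁ * σ * γ₂)⁻¹) =
      cycleCount (sigma0 n * σ * sigma0 n * σ⁻¹) := by
  rw [conj_aux _ _ _ _ (h₁ (sigma0 n) rfl).symm (h₂ (sigma0 n) rfl).symm]
  unfold cycleCount
  rw [Equiv.Perm.cycleType_conj]
end

section
/- Any permutation σ ∈ S_{2n} can be written as σ = η τ̃ ξ where η, ξ ∈ S_n[S_2] and τ̃ is a permutation fixing all odd numbers 1,3,…,2n−1 and permuting only the even numbers; i.e., the double coset S_n[S_2]\S_{2n}/S_n[S_2] has a representative supported on the even positions. -/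
open Equiv Finset Function Subgroup

lemma Equiv.swap_false_true_apply (b : Bool) : swap false true b = !b := by
  cases b <;> decide

lemma Equiv.Perm.apply_not (f : Perm Bool) (b : Bool) : f (!b) = !f b := by
  rw [Bool.eq_not_iff, Ne, f.apply_eq_iff_eq]
  cases b <;> decide

lemma prodShear_mem_centralizer_sigma0 {n : ℕ} (e : Perm (Fin n)) (f : Fin n → Perm Bool) :
    prodShear e f ∈ centralizer {sigma0 n} := by
  rw [mem_centralizer_singleton_iff]
  ext ⟨k, b⟩ <;> simp [sigma0, prodShear_apply, swap_false_true_apply, Perm.apply_not]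

lemma exists_mem_centralizer_sigma0_apply_false {n : ℕ} (h : Fin n → Fin n × Bool)
    (hh : Bijective (Prod.fst ∘ h)) :
    ∃ π ∈ centralizer {sigma0 n}, ∀ k, π (k, false) = h k := by
  refine ⟨prodShear (ofBijective _ hh) fun k => if (h k).2 then swap false true else 1,
    prodShear_mem_centralizer_sigma0 _ _, fun k => ?_⟩
  ext
  · rfl
  · cases hk : (h k).2 <;> simp [prodShear_apply, hk]

/-- Hall's marriage theorem: `σ` maps the `2 * s.card` points of `s ×ˢ univ` injectively into
`(s.biUnion t) ×ˢ univ`, so the candidate sets `t a = {(σ (a, b)).1 | b}` satisfy Hall's condition. -/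
lemma Equiv.Perm.exists_bijective_fst_apply {α : Type*} [Fintype α] [DecidableEq α]
    (σ : Perm (α × Bool)) : ∃ c : α → Bool, Bijective fun a => (σ (a, c a)).1 := by
  let t : α → Finset α := fun a => univ.image fun b => (σ (a, b)).1
  have hall : ∀ s : Finset α, s.card ≤ (s.biUnion t).card := by
    intro s
    have : (s ×ˢ (univ : Finset Bool)).card ≤ ((s.biUnion t) ×ˢ (univ : Finset Bool)).card := by
      refine card_le_card_of_injOn σ (fun ⟨a, b⟩ hab => ?_) σ.injective.injOn
      simp only [coe_product, Set.mem_prod, mem_coe, coe_univ, Set.mem_univ, and_true] at hab ⊢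
      exact mem_biUnion.2 ⟨a, hab, mem_image_of_mem _ (mem_univ b)⟩
    simpa [card_product] using this
  obtain ⟨f, hf, hft⟩ := (all_card_le_biUnion_card_iff_exists_injective t).1 hall
  choose c hc using fun a => mem_image.1 (hft a)
  refine ⟨c, Finite.injective_iff_bijective.1 ?_⟩
  simpa only [fun a => (hc a).2] using hf

/-- Every permutation `σ ∈ S_{2n}` can be written as `σ = η τ̃ ξ` with
`η, ξ ∈ S_n[S_2]` (the centralizer of `Σ₀`) and `τ̃` a permutation fixing all odd
points `(k, false)`, i.e. every double coset `S_n[S_2] σ S_n[S_2]` contains a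
representative supported on the even positions. -/
theorem stmt8 (n : ℕ) (σ : Equiv.Perm (Fin n × Bool)) :
    ∃ η τ ξ : Equiv.Perm (Fin n × Bool),
      η ∈ Subgroup.centralizer {sigma0 n} ∧ ξ ∈ Subgroup.centralizer {sigma0 n} ∧
        (∀ k : Fin n, τ (k, false) = (k, false)) ∧ σ = η * τ * ξ := by
  obtain ⟨c, hc⟩ := σ.exists_bijective_fst_apply
  obtain ⟨ξ, hξ, hξ_apply⟩ :=
    exists_mem_centralizer_sigma0_apply_false (fun k => (k, c k)) bijective_id
  obtain ⟨η, hη, hη_apply⟩ := exists_mem_centralizer_sigma0_apply_false _ hc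
  refine ⟨η, η⁻¹ * σ * ξ, ξ⁻¹, hη, inv_mem hξ, fun k => ?_, by group⟩
  rw [Perm.mul_apply, Perm.mul_apply, hξ_apply, ← hη_apply, Perm.inv_def, symm_apply_apply]
end
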